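/- arXiv:math/0102220 — 2 statements merged into one kernel-verified Lean document; each statement's English description precedes it below -/
import Mathlib

section
/- Let W be a set with an associative ℤ-algebra J on free basis {t_w : w ∈ W} with nonnegative integer structure constants γ_{x,y,z} (t_x t_y = Σ_z γ_{x,y,z} t_{z⁻¹}). Define w ∼_L w' iff t_w · t_{w'⁻¹} ≠ 0, and say w ∼_{LR} w' iff there exists y with t_w · t_y · t_{w'} ≠ 0. If w ∼_{LR} w', then there exists y ∈ W with w ∼_L y⁻¹ and y ∼_L w'⁻¹. -/
open Finsupp in
/-- Let `J = W →₀ ℤ` be an associative `ℤ`-algebra on the free basis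
`{t_w = single w 1}` with nonnegative integer structure constants `γ`,
`t_x · t_y = ∑ z, γ x y z • t_{z⁻¹}` (expressed by the coefficient condition below, where
`z ↦ z⁻¹` is an involution `inv`).  Define `w ∼_L w'` iff `t_w · t_{w'⁻¹} ≠ 0`.
If `w ∼_{LR} w'`, i.e. there is `y` with `t_w · t_y · t_{w'} ≠ 0`, then there exists
`y ∈ W` with `w ∼_L y⁻¹` and `y ∼_L w'⁻¹`. -/
theorem stmt2 {W : Type} (inv : W → W) (hinv : Function.Involutive inv)
    (γ : W → W → W → ℕ)
    (mul : (W →₀ ℤ) → (W →₀ ℤ) → (W →₀ ℤ))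
    (hadd_left : ∀ a b c : W →₀ ℤ, mul (a + b) c = mul a c + mul b c)
    (hadd_right : ∀ a b c : W →₀ ℤ, mul a (b + c) = mul a b + mul a c)
    (hsmul_left : ∀ (n : ℤ) (a b : W →₀ ℤ), mul (n • a) b = n • mul a b)
    (hsmul_right : ∀ (n : ℤ) (a b : W →₀ ℤ), mul a (n • b) = n • mul a b)
    (hstruct : ∀ x y z : W, (mul (single x 1) (single y 1)) (inv z) = (γ x y z : ℤ))
    (hassoc : ∀ a b c : W →₀ ℤ, mul (mul a b) c = mul a (mul b c))
    -- the left-cell relation `w ∼_L w'  ⟺  t_w t_{w'⁻¹} ≠ 0`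
    (simL : W → W → Prop)
    (hsimL : ∀ w w', simL w w' ↔ mul (single w 1) (single (inv w') 1) ≠ 0)
    (w w' : W)
    (hLR : ∃ y, mul (mul (single w 1) (single y 1)) (single w' 1) ≠ 0) :
    ∃ y : W, simL w (inv y) ∧ simL y (inv w') := by
  obtain ⟨y, hy⟩ := hLR
  have h0l : ∀ c : W →₀ ℤ, mul 0 c = 0 := fun c => by
    simpa using hsmul_left 0 0 c
  have h0r : ∀ a : W →₀ ℤ, mul a 0 = 0 := fun a => by
    simpa using hsmul_right 0 a 0
  refine ⟨y, ?_, ?_⟩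
  · rw [hsimL, hinv y]
    intro h
    exact hy (by rw [h, h0l])
  · rw [hsimL, hinv w']
    intro h
    exact hy (by rw [hassoc, h, h0r])
end

section
/- Let A be a finite-dimensional semisimple algebra over a field k with 1 = Σ e_i a decomposition into minimal central orthogonal idempotents, and suppose a group H acts on A by automorphisms permuting the e_i transitively. Let H₁ = Stab_H(e₁). Then A is isomorphic, as an algebra with H-action, to the induced algebra Ind_{H₁}^H(e₁ A e₁) := {f : H → e₁Ae₁ twisted-equivariant functions} — equivalently, A ≅ ⊕_{i} e_i A e_i with H permuting the summands compatibly with the action of H₁ on e₁Ae₁. -/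
/-- The corner `e A e = {x | e x = x ∧ x e = x}` of a ring `A` at an idempotent central
element `e`, as a non-unital subring (a non-unital ring with unit `e`). -/
def corner {A : Type} [Ring A] (e : A) : NonUnitalSubring A where
  carrier := {x | e * x = x ∧ x * e = x}
  zero_mem' := ⟨mul_zero e, zero_mul e⟩
  add_mem' := fun ha hb => ⟨by rw [mul_add, ha.1, hb.1], by rw [add_mul, ha.2, hb.2]⟩
  neg_mem' := fun ha => ⟨by rw [mul_neg, ha.1], by rw [neg_mul, ha.2]⟩
  mul_mem' := fun ha hb => ⟨by rw [← mul_assoc, ha.1], by rw [mul_assoc, hb.2]⟩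

/-- Let `A` be a finite-dimensional semisimple algebra over a field `k` with
`1 = ∑ e i` a decomposition into minimal central orthogonal idempotents, and suppose a
group `H` acts on `A` by algebra automorphisms permuting the `e i` transitively.  Then `A`
is isomorphic, as a ring with `H`-action, to `⊕ᵢ eᵢ A eᵢ` (which realizes the induced
algebra `Ind_{H₁}^H (e₁ A e₁)` for `H₁ = Stab_H(e₁)`): there is a ring isomorphism
`f : A ≃ ∏ᵢ eᵢ A eᵢ`, `f a = (eᵢ a eᵢ)ᵢ`, under which the action of `g ∈ H` permutes the
summands according to its permutation of the idempotents, compatibly with the action of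
the stabilizers. -/
theorem stmt10 {k : Type} [Field k] {A : Type} [Ring A] [Algebra k A]
    [FiniteDimensional k A] [IsSemisimpleRing A]
    {n : ℕ} (e : Fin n → A)
    (hcentral : ∀ i, ∀ a : A, e i * a = a * e i)
    (horth : ∀ i j, e i * e j = if i = j then e i else 0)
    (hsum : ∑ i, e i = 1)
    (hmin : ∀ i, ∀ f g : A,
      (∀ a, f * a = a * f) → (∀ a, g * a = a * g) →
      f * f = f → g * g = g → f * g = 0 → g * f = 0 → e i = f + g →
      f = 0 ∨ g = 0)
    {H : Type} [Group H] (φ : H →* (A ≃ₐ[k] A))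
    (hperm : ∀ (g : H) (i : Fin n), ∃ j : Fin n, φ g (e i) = e j)
    (htrans : ∀ i j : Fin n, ∃ g : H, φ g (e i) = e j) :
    ∃ f : A ≃+* ∀ i : Fin n, corner (e i),
      (∀ (a : A) (i : Fin n), ((f a i : A)) = e i * a * e i) ∧
      (∀ (g : H) (a : A) (i j : Fin n), φ g (e i) = e j →
        ((f (φ g a) j : A)) = φ g (f a i : A)) := by
  have hidem : ∀ i, e i * e i = e i := fun i => by simpa using horth i i
  have hea : ∀ i (a : A), e i * a * e i = e i * a := fun i a => by
    rw [mul_assoc, ← hcentral i a, ← mul_assoc, hidem]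
  refine ⟨{
    toFun := fun a i => ⟨e i * a * e i,
      by rw [← mul_assoc, ← mul_assoc, hidem],
      by rw [mul_assoc, hidem]⟩
    invFun := fun x => ∑ i, (x i : A)
    left_inv := fun a => by
      simp only [hea]
      rw [← Finset.sum_mul, hsum, one_mul]
    right_inv := fun x => by
      funext j
      ext
      show e j * (∑ i, (x i : A)) * e j = (x j : A)
      rw [Finset.mul_sum, Finset.sum_mul,
        Finset.sum_eq_single j (fun i _ hij => by
          rw [← (x i).2.1, ← mul_assoc, horth j i,
            if_neg (Ne.symm hij), zero_mul, zero_mul])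
          (fun h => absurd (Finset.mem_univ j) h)]
      rw [(x j).2.1, (x j).2.2]
    map_mul' := fun a b => by
      funext i
      ext
      show e i * (a * b) * e i = (e i * a * e i) * (e i * b * e i)
      rw [hea, hea, hea, ← mul_assoc (e i * a) (e i) b, hea, mul_assoc]
    map_add' := fun a b => by
      funext i
      ext
      show e i * (a + b) * e i = e i * a * e i + e i * b * e i
      rw [mul_add, add_mul]
  }, fun a i => rfl, ?_⟩
  intro g a i j hgij
  show e j * φ g a * e j = φ g (e i * a * e i)
  rw [map_mul, map_mul, hgij]
end
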